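/- arXiv:0902.1236 — 9 statements merged into one kernel-verified Lean document; each statement's English description precedes it below -/
import Mathlib

section
/- A commutative ring R is weak von Neumann regular if and only if for every a ∈ R and every nonunit idempotent e ∈ R with a ∈ Re, one has a ∈ Ra². -/
/-- A commutative ring is weak von Neumann regular (WVNR) if for every pair of
finitely generated ideals `I ⊆ J ⊊ R`, if `J` is generated by an idempotent,
then so is `I`. -/
def IsWVNR (R : Type _) [CommRing R] : Prop :=
  ∀ I J : Ideal R, I.FG → J.FG → I ≤ J → J ≠ ⊤ →
    (∃ e : R, IsIdempotentElem e ∧ J = Ideal.span {e}) →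
    ∃ f : R, IsIdempotentElem f ∧ I = Ideal.span {f}

/-- von Neumann regular: every `x` satisfies `x = x² y` for some `y`. -/
def IsVNRegular (R : Type _) [CommRing R] : Prop :=
  ∀ x : R, ∃ y : R, x = x ^ 2 * y

/-! A finitely generated ideal is generated by an idempotent iff it is idempotent
(`Ideal.isIdempotentElem_iff_of_fg`), and a principal ideal `(a)` is idempotent iff
`a ∈ (a²)`. Applied to `I = (a)` this gives one direction; for the other, every `a ∈ I`
lies in `(a²) ⊆ I²`, so `I` is idempotent. -/

namespace Ideal

variable {R : Type*} [CommRing R]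

theorem isIdempotentElem_span_singleton_iff {a : R} :
    IsIdempotentElem (span {a}) ↔ ∃ x : R, a = a ^ 2 * x := by
  rw [IsIdempotentElem, span_singleton_mul_span_singleton, ← sq]
  constructor
  · intro h
    exact mem_span_singleton'.mp (h ▸ mem_span_singleton_self a) |>.imp
      fun x hx => hx.symm.trans (mul_comm _ _)
  · rintro ⟨x, hx⟩
    refine le_antisymm (span_singleton_le_span_singleton.mpr (dvd_pow_self a two_ne_zero)) ?_
    exact span_singleton_le_span_singleton.mpr ⟨x, hx⟩

theorem isIdempotentElem_of_forall_exists_eq_sq_mul {I : Ideal R}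
    (h : ∀ a ∈ I, ∃ x : R, a = a ^ 2 * x) : IsIdempotentElem I := by
  refine le_antisymm mul_le_right fun a ha => ?_
  obtain ⟨x, hx⟩ := h a ha
  rw [hx, sq, mul_assoc]
  exact mul_mem_mul ha (I.mul_mem_right _ ha)

end Ideal

open Ideal in
theorem stmt_1_general (R : Type _) [CommRing R] :
    IsWVNR R ↔ ∀ a e : R, IsIdempotentElem e → ¬ IsUnit e →
      a ∈ Ideal.span ({e} : Set R) → ∃ x : R, a = a ^ 2 * x := by
  constructor
  · intro hW a e he hue ha
    obtain ⟨f, hf, hspan⟩ := hW (span {a}) (span {e}) (Submodule.fg_span_singleton a)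
      (Submodule.fg_span_singleton e) (span_singleton_le_iff_mem _ |>.mpr ha)
      (mt span_singleton_eq_top.mp hue) ⟨e, he, rfl⟩
    exact isIdempotentElem_span_singleton_iff.mp
      ((isIdempotentElem_iff_of_fg _ (Submodule.fg_span_singleton a)).mpr ⟨f, hf, hspan⟩)
  · rintro h I J hI - hIJ hJ ⟨e, he, rfl⟩
    have hue : ¬ IsUnit e := fun hu => hJ (span_singleton_eq_top.mpr hu)
    exact (isIdempotentElem_iff_of_fg I hI).mp
      (isIdempotentElem_of_forall_exists_eq_sq_mul fun a ha => h a e he hue (hIJ ha))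

theorem stmt_1 (R : Type _) [CommRing R] [Nontrivial R] :
    IsWVNR R ↔ ∀ a e : R, IsIdempotentElem e → ¬ IsUnit e →
      a ∈ Ideal.span ({e} : Set R) → ∃ x : R, a = a ^ 2 * x :=
  stmt_1_general R
end

section
/- A commutative ring R is weak von Neumann regular if and only if for every a ∈ R and every nonunit idempotent e ∈ R with a ∈ Re, the ideal Ra is a direct summand of R (i.e., there is an ideal I with Ra ⊕ I = R). -/
lemma wvnr_inf_compl {R : Type _} [CommRing R] {f : R} (hf : IsIdempotentElem f) :
    Ideal.span ({f} : Set R) ⊓ Ideal.span {1 - f} = ⊥ := by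
  rw [eq_bot_iff]
  intro x hx
  rw [Submodule.mem_inf, Ideal.mem_span_singleton, Ideal.mem_span_singleton] at hx
  obtain ⟨⟨c, hc⟩, ⟨d, hd⟩⟩ := hx
  have hf' : f * f = f := hf
  have h1 : x * f = x := by
    calc x * f = f * f * c := by rw [hc]; ring
    _ = f * c := by rw [hf']
    _ = x := hc.symm
  have h2 : x * f = 0 := by
    calc x * f = d * (f - f * f) := by rw [hd]; ring
    _ = 0 := by rw [hf']; ring
  simpa [h2] using h1.symm

lemma wvnr_sup_compl {R : Type _} [CommRing R] (f : R) :
    Ideal.span ({f} : Set R) ⊔ Ideal.span {1 - f} = ⊤ := by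
  rw [Ideal.eq_top_iff_one]
  exact Submodule.mem_sup.mpr ⟨f, Ideal.mem_span_singleton_self f,
    1 - f, Ideal.mem_span_singleton_self (1 - f), by ring⟩

lemma summand_idem {R : Type _} [CommRing R] {a : R} {I : Ideal R}
    (h1 : Ideal.span ({a} : Set R) ⊓ I = ⊥) (h2 : Ideal.span ({a} : Set R) ⊔ I = ⊤) :
    ∃ f : R, IsIdempotentElem f ∧ Ideal.span ({a} : Set R) = Ideal.span {f} := by
  have h1' : (1 : R) ∈ Ideal.span ({a} : Set R) ⊔ I := h2 ▸ Submodule.mem_top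
  obtain ⟨x, hx, y, hy, hxy⟩ := Submodule.mem_sup.mp h1'
  have hxy0 : x * y = 0 := by
    have : x * y ∈ Ideal.span ({a} : Set R) ⊓ I :=
      ⟨Ideal.mul_mem_right _ _ hx, Ideal.mul_mem_left _ _ hy⟩
    rw [h1] at this
    exact this
  refine ⟨x, ?_, ?_⟩
  · show x * x = x
    calc x * x = x * (x + y) - x * y := by ring
    _ = x := by rw [hxy, hxy0]; ring
  · apply le_antisymm
    · intro z hz
      have hzy : z * y = 0 := by
        have : z * y ∈ Ideal.span ({a} : Set R) ⊓ I :=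
          ⟨Ideal.mul_mem_right _ _ hz, Ideal.mul_mem_left _ _ hy⟩
        rw [h1] at this
        exact this
      have : z = z * x := by
        calc z = z * (x + y) := by rw [hxy]; ring
        _ = z * x := by rw [mul_add, hzy]; ring
      rw [this]
      exact Ideal.mul_mem_left _ z (Ideal.mem_span_singleton_self x)
    · rw [Ideal.span_le, Set.singleton_subset_iff]
      exact hx

lemma idem_sup_idem {R : Type _} [CommRing R] {f g : R}
    (hf : IsIdempotentElem f) (hg : IsIdempotentElem g) :
    ∃ h : R, IsIdempotentElem h ∧
      Ideal.span ({f} : Set R) ⊔ Ideal.span {g} = Ideal.span {h} := by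
  have hf' : f * f = f := hf
  have hg' : g * g = g := hg
  refine ⟨f + g - f * g, ?_, ?_⟩
  · show (f + g - f * g) * (f + g - f * g) = f + g - f * g
    calc (f + g - f * g) * (f + g - f * g)
        = f*f + g*g + (f*f)*(g*g) + 2*(f*g) - 2*((f*f)*g) - 2*(f*(g*g)) := by ring
    _ = f + g - f * g := by rw [hf', hg']; ring
  · apply le_antisymm
    · rw [sup_le_iff]
      constructor
      · rw [Ideal.span_le, Set.singleton_subset_iff, SetLike.mem_coe,
          Ideal.mem_span_singleton]
        exact ⟨f, by linear_combination (g - 1) * hf'⟩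
      · rw [Ideal.span_le, Set.singleton_subset_iff, SetLike.mem_coe,
          Ideal.mem_span_singleton]
        exact ⟨g, by linear_combination (f - 1) * hg'⟩
    · rw [Ideal.span_le, Set.singleton_subset_iff]
      have h1 : f + g - f * g = f * (1 - g) + g := by ring
      rw [SetLike.mem_coe, h1]
      exact Submodule.add_mem_sup
        (Ideal.mul_mem_right _ _ (Ideal.mem_span_singleton_self f))
        (Ideal.mem_span_singleton_self g)

theorem stmt_2 (R : Type _) [CommRing R] [Nontrivial R] :
    IsWVNR R ↔ ∀ a e : R, IsIdempotentElem e → ¬ IsUnit e →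
      a ∈ Ideal.span ({e} : Set R) →
      ∃ I : Ideal R, Ideal.span ({a} : Set R) ⊓ I = ⊥ ∧
        Ideal.span ({a} : Set R) ⊔ I = ⊤ := by
  constructor
  · intro hW a e he hne ha
    obtain ⟨f, hf, hspan⟩ := hW (Ideal.span {a}) (Ideal.span {e})
      ⟨{a}, by simp⟩ ⟨{e}, by simp⟩
      (by rw [Ideal.span_le, Set.singleton_subset_iff]; exact ha)
      (by rw [Ne, Ideal.span_singleton_eq_top]; exact hne)
      ⟨e, he, rfl⟩
    exact ⟨Ideal.span {1 - f}, by rw [hspan]; exact wvnr_inf_compl hf,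
      by rw [hspan]; exact wvnr_sup_compl f⟩
  · intro H I J hIfg hJfg hIJ hJtop ⟨e, he, hJ⟩
    have hne : ¬ IsUnit e := by
      intro hu
      exact hJtop (hJ.trans (Ideal.span_singleton_eq_top.mpr hu))
    have key : ∀ s : Finset R, (↑s : Set R) ⊆ (Ideal.span {e} : Ideal R) →
        ∃ f : R, IsIdempotentElem f ∧ Ideal.span (↑s : Set R) = Ideal.span {f} := by
      classical
      intro s
      induction s using Finset.induction_on with
      | empty =>
        intro _
        exact ⟨0, by simp [IsIdempotentElem],
          by simp [(Ideal.span_singleton_eq_bot).mpr rfl]⟩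
      | @insert a s ha ih =>
        intro hsub
        rw [Finset.coe_insert] at hsub ⊢
        have hae : a ∈ Ideal.span ({e} : Set R) :=
          hsub (Set.mem_insert a ↑s)
        obtain ⟨f, hfidem, hfspan⟩ := ih (fun x hx => hsub (Set.mem_insert_of_mem a hx))
        obtain ⟨Iₐ, hinf, hsup⟩ := H a e he hne hae
        obtain ⟨g, hgidem, hgspan⟩ := summand_idem hinf hsup
        obtain ⟨h, hhidem, hhspan⟩ := idem_sup_idem hgidem hfidem
        refine ⟨h, hhidem, ?_⟩
        rw [Ideal.span_insert, hgspan, hfspan, hhspan]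
    obtain ⟨s, hs⟩ := hIfg
    have hsub : (↑s : Set R) ⊆ (Ideal.span {e} : Ideal R) := by
      intro x hx
      have : x ∈ I := hs ▸ Ideal.subset_span hx
      exact hJ ▸ hIJ this
    obtain ⟨f, hfidem, hfspan⟩ := key s hsub
    exact ⟨f, hfidem, hs ▸ hfspan⟩
end

section
/- A commutative ring R is von Neumann regular if and only if R is weak von Neumann regular and for every nonunit element a of R there exists an idempotent e ≠ 1 of R such that a ∈ Re. -/
/-!
A ring is von Neumann regular exactly when every principal ideal is generated by an idempotent
(for `x = x²y` take `e = xy`). Given a nonunit `a ∈ Re` with `e ≠ 1` idempotent, the ideal `Re`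
is proper, so weak regularity applied to `Ra ⊆ Re` makes `Ra` idempotent-generated. Conversely,
in a regular ring every ideal satisfies `I = I²` (as `x = x · xy`), hence a finitely generated
one is generated by an idempotent.
-/

open Ideal

section

variable {R : Type*} [CommRing R]

theorem exists_eq_sq_mul_iff_exists_isIdempotentElem_span_eq {x : R} :
    (∃ y, x = x ^ 2 * y) ↔ ∃ e, IsIdempotentElem e ∧ span {x} = span {e} := by
  constructor
  · rintro ⟨y, hy⟩
    refine ⟨x * y, ?_, le_antisymm ?_ ?_⟩
    · rw [IsIdempotentElem, show x * y * (x * y) = x ^ 2 * y * y by ring, ← hy]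
    · exact span_singleton_le_span_singleton.mpr ⟨x, by linear_combination hy⟩
    · exact span_singleton_le_span_singleton.mpr (dvd_mul_right x y)
  · rintro ⟨e, he, hxe⟩
    obtain ⟨c, hc⟩ := span_singleton_le_span_singleton.mp hxe.le
    obtain ⟨d, hd⟩ := span_singleton_le_span_singleton.mp hxe.ge
    refine ⟨d, ?_⟩
    calc x = x * e := by rw [hc, mul_right_comm, he.eq]
      _ = x ^ 2 * d := by rw [hd]; ring

theorem span_singleton_ne_top_of_isIdempotentElem {e : R} (he : IsIdempotentElem e)
    (he1 : e ≠ 1) : span {e} ≠ ⊤ := fun htop =>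
  he1 ((IsIdempotentElem.iff_eq_one_of_isUnit (span_singleton_eq_top.mp htop)).mp he)

theorem IsVNRegular.isIdempotentElem_ideal (h : IsVNRegular R) (I : Ideal R) :
    IsIdempotentElem I := by
  refine le_antisymm mul_le_right fun x hx => ?_
  obtain ⟨y, hy⟩ := h x
  have hxy : x = x * (x * y) := by linear_combination hy
  rw [hxy]
  exact mul_mem_mul hx (I.mul_mem_right y hx)

theorem IsVNRegular.exists_isIdempotentElem_eq_span_of_fg (h : IsVNRegular R) {I : Ideal R}
    (hI : I.FG) : ∃ e, IsIdempotentElem e ∧ I = span {e} :=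
  (I.isIdempotentElem_iff_of_fg hI).mp (h.isIdempotentElem_ideal I)

end

theorem stmt_4_general (R : Type _) [CommRing R] :
    IsVNRegular R ↔ IsWVNR R ∧ ∀ a : R, ¬ IsUnit a →
      ∃ e : R, IsIdempotentElem e ∧ e ≠ 1 ∧ a ∈ Ideal.span ({e} : Set R) := by
  constructor
  · intro h
    refine ⟨fun I _ hI _ _ _ _ => h.exists_isIdempotentElem_eq_span_of_fg hI, fun a ha => ?_⟩
    obtain ⟨e, he, hae⟩ := exists_eq_sq_mul_iff_exists_isIdempotentElem_span_eq.mp (h a)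
    refine ⟨e, he, ?_, hae ▸ mem_span_singleton_self a⟩
    rintro rfl
    exact ha (span_singleton_eq_top.mp (hae.trans span_singleton_one))
  · rintro ⟨hw, hid⟩ x
    rw [exists_eq_sq_mul_iff_exists_isIdempotentElem_span_eq]
    by_cases hx : IsUnit x
    · exact ⟨1, .one, by rw [span_singleton_eq_top.mpr hx, span_singleton_one]⟩
    obtain ⟨e, he, he1, hxe⟩ := hid x hx
    exact hw _ _ (Submodule.fg_span_singleton x) (Submodule.fg_span_singleton e)
      (span_singleton_le_iff_mem _ |>.mpr hxe) (span_singleton_ne_top_of_isIdempotentElem he he1)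
      ⟨e, he, rfl⟩

theorem stmt_4 (R : Type _) [CommRing R] [Nontrivial R] :
    IsVNRegular R ↔ IsWVNR R ∧ ∀ a : R, ¬ IsUnit a →
      ∃ e : R, IsIdempotentElem e ∧ e ≠ 1 ∧ a ∈ Ideal.span ({e} : Set R) :=
  stmt_4_general R
end

section
/- The ring ℤⁿ (direct product of n ≥ 2 copies of ℤ) is not a weak von Neumann regular ring. -/
theorem stmt_7 (n : ℕ) (hn : 2 ≤ n) : ¬ IsWVNR (Fin n → ℤ) := by
  intro h
  set e : Fin n → ℤ := fun i => if i = ⟨0, by omega⟩ then 1 else 0 with he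
  have hidem : IsIdempotentElem e := by
    funext i
    simp only [he, Pi.mul_apply]
    by_cases hi : i = ⟨0, by omega⟩ <;> simp [hi]
  have h1 : (⟨1, by omega⟩ : Fin n) ≠ ⟨0, by omega⟩ := by
    intro hc; exact one_ne_zero (congrArg Fin.val hc)
  obtain ⟨f, hf, hI⟩ := h (Ideal.span {2 * e}) (Ideal.span {e})
    ⟨{2 * e}, by simp⟩ ⟨{e}, by simp⟩
    (Ideal.span_le.mpr (by simp [Ideal.mem_span_singleton]))
    (by
      intro htop
      have : (1 : Fin n → ℤ) ∈ Ideal.span {e} := htop ▸ Submodule.mem_top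
      obtain ⟨c, hc⟩ := Ideal.mem_span_singleton'.mp this
      have := congrFun hc ⟨1, by omega⟩
      simp [he, h1] at this)
    ⟨e, hidem, rfl⟩
  -- f ∈ span {2e}, so every component of f is even; f idempotent ⇒ each component 0
  have hfI : f ∈ Ideal.span {(2 : Fin n → ℤ) * e} := hI ▸ Ideal.mem_span_singleton_self f
  obtain ⟨b, hb⟩ := Ideal.mem_span_singleton'.mp hfI
  have hf0 : f = 0 := by
    funext i
    have hid : f i * f i = f i := congrFun hf i
    have heven : f i = b i * (2 * e i) := (congrFun hb i).symm
    rcases IsIdempotentElem.iff_eq_zero_or_one.mp hid with h0 | h1'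
    · exact h0
    · exfalso
      have hd : (2 : ℤ) ∣ f i := ⟨b i * e i, by rw [heven]; ring⟩
      rw [h1'] at hd
      norm_num at hd
  have h2e : (2 : Fin n → ℤ) * e ∈ Ideal.span {f} := hI ▸ Ideal.mem_span_singleton_self _
  rw [hf0, Ideal.span_singleton_eq_bot.mpr rfl] at h2e
  have := congrFun (Submodule.mem_bot _ |>.mp h2e) ⟨0, by omega⟩
  simp [he] at this
end

section
/- If I is a primary ideal of a commutative ring R, then the quotient ring R/I has exactly two idempotent elements, 0 and 1, and consequently R/I is a weak von Neumann regular ring. -/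
theorem stmt_9 (R : Type _) [CommRing R] [Nontrivial R] (I : Ideal R)
    (hI : I.IsPrimary) :
    (∀ a : R ⧸ I, IsIdempotentElem a → a = 0 ∨ a = 1) ∧ IsWVNR (R ⧸ I) := by
  have key : ∀ a : R ⧸ I, IsIdempotentElem a → a = 0 ∨ a = 1 := by
    intro a ha
    obtain ⟨x, rfl⟩ := Ideal.Quotient.mk_surjective a
    have hmem : x * (x - 1) ∈ I := by
      rw [← Ideal.Quotient.eq_zero_iff_mem]
      have : Ideal.Quotient.mk I x * (Ideal.Quotient.mk I x - 1)
          = Ideal.Quotient.mk I x * Ideal.Quotient.mk I x - Ideal.Quotient.mk I x := by ring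
      rw [map_mul, map_sub, map_one, this, ha.eq, sub_self]
    rcases (Ideal.isPrimary_iff.mp hI).2 hmem with h | h
    · left; rwa [Ideal.Quotient.eq_zero_iff_mem]
    · right
      obtain ⟨n, hn⟩ := h
      set c : R ⧸ I := 1 - Ideal.Quotient.mk I x with hc
      have hcid : IsIdempotentElem c := by
        have := ha.one_sub
        simpa [hc] using this
      have hnil : c ^ n = 0 := by
        have h1 : (Ideal.Quotient.mk I (x - 1)) ^ n = 0 := by
          rw [← map_pow, Ideal.Quotient.eq_zero_iff_mem]; exact hn
        have h2 : c = -(Ideal.Quotient.mk I (x - 1)) := by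
          simp [hc, map_sub]
        rw [h2, neg_pow, h1, mul_zero]
      have hc0 : c = 0 := by
        have : c = c ^ (n + 1) := (hcid.pow_succ_eq n).symm
        rw [this, pow_succ, hnil, zero_mul]
      have : Ideal.Quotient.mk I x = 1 := by
        have := hc0
        rw [hc, sub_eq_zero] at this
        exact this.symm
      exact this
  refine ⟨key, ?_⟩
  intro I' J _ _ hle hJtop ⟨e, he, hJ⟩
  have he0 : e = 0 := by
    rcases key e he with h | h
    · exact h
    · exact absurd (by rw [hJ, h, Ideal.span_singleton_one]) hJtop
  have hJbot : J = ⊥ := by rw [hJ, he0, Ideal.span_singleton_eq_bot]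
  have hIbot : I' = ⊥ := le_bot_iff.mp (hJbot ▸ hle)
  exact ⟨0, by simp [IsIdempotentElem], by rw [hIbot]; exact (Ideal.span_singleton_eq_bot.mpr rfl).symm⟩
end

section
/- For a commutative ring R, the polynomial ring R[x] is weak von Neumann regular if and only if R has exactly two idempotent elements (0 and 1). -/
/-!
An idempotent polynomial `g` with `g(0) = 0` vanishes, since `g = g ^ (deg g + 1)` is divisible by
`X ^ (deg g + 1)`. Hence every idempotent `f` of `R[X]` is the constant `C (f(0))`, and `R[X]` has
the same idempotents as `R`. If these are only `0` and `1`, a proper ideal generated by an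
idempotent is `⊥`, so `R[X]` is WVNR. Conversely, for an idempotent `e ≠ 1` of `R` the ideal
`(e X)` lies in the proper ideal `(e)`; an idempotent generator of `(e X)` is divisible by `X`,
hence zero, so `e X = 0` and `e = 0`.
-/

open Polynomial

theorem isWVNR_of_isIdempotentElem_eq_zero_or_one {S : Type _} [CommRing S]
    (h : ∀ e : S, IsIdempotentElem e → e = 0 ∨ e = 1) : IsWVNR S := by
  rintro I J - - hIJ hJ ⟨e, he, rfl⟩
  rcases h e he with rfl | rfl
  · refine ⟨0, .zero, ?_⟩
    rw [Ideal.span_singleton_eq_bot.mpr rfl] at hIJ ⊢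
    exact le_bot_iff.mp hIJ
  · exact absurd Ideal.span_singleton_one hJ

namespace Polynomial

variable {R : Type _} [CommRing R]

theorem IsIdempotentElem.eq_zero_of_coeff_zero_eq_zero {g : R[X]} (hg : IsIdempotentElem g)
    (h0 : g.coeff 0 = 0) : g = 0 := by
  have hdvd : X ^ (g.natDegree + 1) ∣ g := by
    simpa only [hg.pow_succ_eq] using pow_dvd_pow_of_dvd (X_dvd_iff.mpr h0) (g.natDegree + 1)
  ext n
  rcases le_or_gt n g.natDegree with hn | hn
  · exact X_pow_dvd_iff.mp hdvd n (Nat.lt_succ_of_le hn)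
  · exact coeff_eq_zero_of_natDegree_lt hn

theorem IsIdempotentElem.coeff_zero {f : R[X]} (hf : IsIdempotentElem f) :
    IsIdempotentElem (f.coeff 0) := by
  simpa using hf.map constantCoeff

theorem IsIdempotentElem.eq_C_coeff_zero {f : R[X]} (hf : IsIdempotentElem f) :
    f = C (f.coeff 0) := by
  set a := f.coeff 0
  have ha : IsIdempotentElem a := hf.coeff_zero
  have hCa : IsIdempotentElem (C a) := ha.map C
  have h₁ : (1 - C a) * f = 0 :=
    (hCa.one_sub.mul hf).eq_zero_of_coeff_zero_eq_zero (by simp [mul_coeff_zero, sub_mul, ha.eq, a])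
  have h₂ : C a * (1 - f) = 0 :=
    (hCa.mul hf.one_sub).eq_zero_of_coeff_zero_eq_zero (by simp [mul_coeff_zero, mul_sub, ha.eq, a])
  linear_combination h₁ - h₂

theorem isIdempotentElem_eq_zero_or_one
    (h : ∀ e : R, IsIdempotentElem e → e = 0 ∨ e = 1) (f : R[X]) (hf : IsIdempotentElem f) :
    f = 0 ∨ f = 1 := by
  rw [hf.eq_C_coeff_zero]
  rcases h _ hf.coeff_zero with h0 | h1
  · exact .inl (by simp [h0])
  · exact .inr (by simp [h1])

theorem eq_zero_of_isWVNR (hW : IsWVNR R[X]) {e : R} (he : IsIdempotentElem e) (he1 : e ≠ 1) :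
    e = 0 := by
  have hJ : Ideal.span {C e} ≠ (⊤ : Ideal R[X]) := by
    intro htop
    have hCe : C e = 1 :=
      (IsIdempotentElem.iff_eq_one_of_isUnit (Ideal.span_singleton_eq_top.mp htop)).mp (he.map C)
    exact he1 ((map_eq_one_iff C C_injective).mp hCe)
  obtain ⟨f, hf, hI⟩ := hW (Ideal.span {C e * X}) (Ideal.span {C e}) (Submodule.fg_span_singleton _)
    (Submodule.fg_span_singleton _) (Ideal.span_singleton_le_span_singleton.mpr (dvd_mul_right _ _))
    hJ ⟨C e, he.map C, rfl⟩
  have hf0 : f = 0 := by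
    have hXf : C e * X ∣ f := Ideal.mem_span_singleton.mp (hI ▸ Ideal.mem_span_singleton_self f)
    exact hf.eq_zero_of_coeff_zero_eq_zero (X_dvd_iff.mp (dvd_trans (dvd_mul_left _ _) hXf))
  rw [hf0, Ideal.span_singleton_eq_bot.mpr rfl, Ideal.span_singleton_eq_bot] at hI
  simpa using hI

end Polynomial

theorem stmt_14_general (R : Type _) [CommRing R] :
    IsWVNR (Polynomial R) ↔ ∀ e : R, IsIdempotentElem e → e = 0 ∨ e = 1 :=
  ⟨fun hW _ he => or_iff_not_imp_right.mpr (eq_zero_of_isWVNR hW he),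
    fun h => isWVNR_of_isIdempotentElem_eq_zero_or_one (isIdempotentElem_eq_zero_or_one h)⟩

theorem stmt_14 (R : Type _) [CommRing R] [Nontrivial R] :
    IsWVNR (Polynomial R) ↔ ∀ e : R, IsIdempotentElem e → e = 0 ∨ e = 1 :=
  stmt_14_general R
end

section
/- For a commutative ring R and n ≥ 1, the polynomial ring R[x₁,...,xₙ] in n indeterminates is weak von Neumann regular if and only if R has exactly two idempotent elements, 0 and 1. -/
open MvPolynomial


lemma aux_zero {R : Type _} [CommRing R] {n : ℕ} {v : MvPolynomial (Fin n) R}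
    (hv : IsIdempotentElem v) (h0 : constantCoeff v = 0) : v = 0 := by
  have key : ∀ k : ℕ, ∀ m : Fin n →₀ ℕ, (Finsupp.toMultiset m).card < k →
      coeff m (v ^ k) = 0 := by
    intro k
    induction k with
    | zero => intro m hm; exact absurd hm (Nat.not_lt_zero _)
    | succ k ih =>
      intro m hm
      rw [pow_succ', coeff_mul]
      apply Finset.sum_eq_zero
      intro x hx
      have hxx : x.1 + x.2 = m := Finset.HasAntidiagonal.mem_antidiagonal.mp hx
      by_cases h1 : x.1 = 0
      · have : coeff x.1 v = 0 := by rw [h1]; exact h0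
        rw [this, zero_mul]
      · have hcard : (Finsupp.toMultiset x.1).card + (Finsupp.toMultiset x.2).card
          = (Finsupp.toMultiset m).card := by
          rw [← hxx, Finsupp.toMultiset_add, Multiset.card_add]
        have hpos : 0 < (Finsupp.toMultiset x.1).card := by
          rw [Multiset.card_pos]
          intro hz
          apply h1
          have := congrArg Multiset.toFinsupp hz
          rwa [Finsupp.toMultiset_toFinsupp, Multiset.toFinsupp_zero] at this
        have : (Finsupp.toMultiset x.2).card < k := by omega
        rw [ih x.2 this, mul_zero]
  ext m
  have h := key ((Finsupp.toMultiset m).card + 1) m (Nat.lt_succ_self _)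
  rw [hv.pow_succ_eq] at h
  simp [h]

lemma aux_const {R : Type _} [CommRing R] {n : ℕ} {v : MvPolynomial (Fin n) R}
    (hv : IsIdempotentElem v) : v = C (constantCoeff v) := by
  set e := constantCoeff v with he'
  have hE : (C e : MvPolynomial (Fin n) R) * C e = C e := by
    rw [← map_mul]
    congr 1
    have := congrArg constantCoeff hv
    simpa using this
  have hvv : v * v = v := hv
  have huu : (v - C e) * (v - C e) = (1 - 2 * C e) * (v - C e) := by
    linear_combination hvv - hE
  have hww : IsIdempotentElem ((1 - 2 * C e) * (v - C e)) := by
    show _ * _ = _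
    linear_combination (1 - 2*C e)^2 * huu + 4*((1-2*C e)*(v - C e))*hE
  have hw0 : constantCoeff ((1 - 2 * C e) * (v - C e)) = 0 := by
    simp [he']
  have hwz := aux_zero hww hw0
  have hu : v - C e = 0 := by
    have h2 : (1 - 2 * C e) * ((1 - 2 * C e) * (v - C e)) = v - C e := by
      linear_combination (4*(v - C e))*hE
    rw [hwz, mul_zero] at h2
    exact h2.symm
  exact sub_eq_zero.mp hu


theorem stmt_15 (R : Type _) [CommRing R] [Nontrivial R] (n : ℕ) (hn : 1 ≤ n) :
    IsWVNR (MvPolynomial (Fin n) R) ↔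
      ∀ e : R, IsIdempotentElem e → e = 0 ∨ e = 1 := by
  constructor
  · intro h e he
    by_cases h1 : e = 1
    · exact Or.inr h1
    left
    set i0 : Fin n := ⟨0, hn⟩
    set E : MvPolynomial (Fin n) R := C e
    have hEi : IsIdempotentElem E := by
      show E * E = E
      rw [← map_mul, he]
    have hJtop : Ideal.span {E} ≠ (⊤ : Ideal (MvPolynomial (Fin n) R)) := by
      intro ht
      have : (1 : MvPolynomial (Fin n) R) ∈ Ideal.span {E} := ht ▸ Submodule.mem_top
      obtain ⟨g, hg⟩ := Ideal.mem_span_singleton.mp this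
      have := congrArg constantCoeff hg
      simp [E] at this
      apply h1
      calc e = e * (e * constantCoeff g) := by rw [← this, mul_one]
        _ = (e * e) * constantCoeff g := by ring
        _ = e * constantCoeff g := by rw [he]
        _ = 1 := this.symm
    obtain ⟨f, hf, hI⟩ := h (Ideal.span {E * X i0}) (Ideal.span {E})
      (⟨{E * X i0}, by simp⟩) (⟨{E}, by simp⟩)
      (Ideal.span_singleton_le_span_singleton.mpr ⟨X i0, rfl⟩) hJtop ⟨E, hEi, rfl⟩
    -- f is constant, and f ∈ span {E * X i0} forces constant coeff 0
    have hfc : f = C (constantCoeff f) := aux_const hf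
    have hfm : f ∈ Ideal.span {E * X i0} := hI ▸ Ideal.mem_span_singleton_self f
    obtain ⟨g, hg⟩ := Ideal.mem_span_singleton.mp hfm
    have hf0 : constantCoeff f = 0 := by
      have := congrArg constantCoeff hg
      simpa [E] using this
    have hfz : f = 0 := by rw [hfc, hf0, map_zero]
    have hmem : E * X i0 ∈ Ideal.span {f} := hI ▸ Ideal.mem_span_singleton_self _
    rw [hfz, Ideal.span_singleton_eq_bot.mpr rfl, Ideal.mem_bot] at hmem
    have := congrArg (coeff (Finsupp.single i0 1)) hmem
    simpa [E, coeff_C_mul] using this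
  · intro h I J hIfg hJfg hIJ hJtop ⟨E, hE, hJ⟩
    have hEc : E = C (constantCoeff E) := aux_const hE
    have hec : IsIdempotentElem (constantCoeff E) := by
      show _ * _ = _
      rw [← map_mul, hE]
    rcases h _ hec with h0 | h1
    · refine ⟨0, by simp [IsIdempotentElem], ?_⟩
      have hEz : E = 0 := by rw [hEc, h0, map_zero]
      have : J = ⊥ := by rw [hJ, hEz, Ideal.span_singleton_eq_bot.mpr rfl]
      have hIb : I = ⊥ := le_bot_iff.mp (this ▸ hIJ)
      rw [hIb, Ideal.span_singleton_eq_bot.mpr rfl]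
    · exfalso
      apply hJtop
      rw [hJ, hEc, h1, map_one, Ideal.span_singleton_one]
end

section
/- Let A be a commutative ring, E an A-module, and R = A ⋉ E the trivial ring extension. Then R is weak von Neumann regular if and only if A is weak von Neumann regular and aE = 0 for every nonunit idempotent element a of A. -/
open TrivSqZeroExt Ideal

lemma span_singleton_fg {R : Type _} [CommRing R] (x : R) : (Ideal.span {x}).FG :=
  ⟨{x}, by simp⟩

theorem stmt_18 (A : Type _) (E : Type _) [CommRing A] [Nontrivial A]
    [AddCommGroup E] [Module A E] [Module Aᵐᵒᵖ E] [IsCentralScalar A E] :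
    IsWVNR (TrivSqZeroExt A E) ↔
      IsWVNR A ∧ ∀ a : A, IsIdempotentElem a → ¬ IsUnit a →
        ∀ x : E, a • x = 0 := by
  set π : TrivSqZeroExt A E →+* A :=
    { toFun := TrivSqZeroExt.fst, map_one' := rfl, map_mul' := fun _ _ => rfl,
      map_zero' := rfl, map_add' := fun _ _ => rfl } with hπ
  have hπs : Function.Surjective π := fun a => ⟨inl a, fst_inl E a⟩
  set ι : A →+* TrivSqZeroExt A E := inlHom A E with hι
  have hιa : ∀ a : A, ι a = inl a := fun a => rfl
  constructor
  · rintro hR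
    constructor
    · rintro I J hIfg hJfg hIJ hJtop ⟨e, he, rfl⟩
      have h1 : I.map ι ≤ Ideal.span {(inl e : TrivSqZeroExt A E)} := by
        rw [Ideal.map_le_iff_le_comap]
        intro a ha
        obtain ⟨c, hc⟩ := Ideal.mem_span_singleton.mp (hIJ ha)
        exact Ideal.mem_span_singleton.mpr ⟨inl c, by
          show inl a = inl e * inl c
          rw [← inl_mul, ← hc]⟩
      have h2 : Ideal.span {(inl e : TrivSqZeroExt A E)} ≠ ⊤ := fun h =>
        hJtop (Ideal.span_singleton_eq_top.mpr
          (isUnit_inl_iff.mp (Ideal.span_singleton_eq_top.mp h)))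
      have h3 : IsIdempotentElem (inl e : TrivSqZeroExt A E) := by
        show inl e * inl e = inl e
        rw [← inl_mul, he]
      obtain ⟨f', hf', hI'⟩ := hR (I.map ι) (Ideal.span {inl e}) (hIfg.map ι)
        (span_singleton_fg _) h1 h2 ⟨inl e, h3, rfl⟩
      refine ⟨π f', ?_, ?_⟩
      · show π f' * π f' = π f'
        rw [← _root_.map_mul, hf']
      · have hcomp : π.comp ι = RingHom.id A := by
          ext a; exact fst_inl E a
        have : I = (I.map ι).map π := by
          rw [Ideal.map_map, hcomp, Ideal.map_id]
        rw [this, hI', Ideal.map_span, Set.image_singleton]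
    · intro a ha hna x
      have h1 : Ideal.span {(inr (a • x) : TrivSqZeroExt A E)} ≤ Ideal.span {inl a} := by
        intro z hz
        obtain ⟨c, hc⟩ := Ideal.mem_span_singleton.mp hz
        refine Ideal.mem_span_singleton.mpr (dvd_trans ⟨inr x, ?_⟩ ⟨c, hc⟩)
        rw [inl_mul_inr]
      have h2 : Ideal.span {(inl a : TrivSqZeroExt A E)} ≠ ⊤ := fun h =>
        hna (isUnit_inl_iff.mp (Ideal.span_singleton_eq_top.mp h))
      have h3 : IsIdempotentElem (inl a : TrivSqZeroExt A E) := by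
        show inl a * inl a = inl a
        rw [← inl_mul, ha]
      obtain ⟨f, hf, hI⟩ := hR (Ideal.span {inr (a • x)}) (Ideal.span {inl a})
        (span_singleton_fg _) (span_singleton_fg _) h1 h2 ⟨inl a, h3, rfl⟩
      have hffst : f.fst = 0 := by
        have hfmem : f ∈ Ideal.span {(inr (a • x) : TrivSqZeroExt A E)} :=
          hI ▸ Ideal.mem_span_singleton_self f
        obtain ⟨c, hc⟩ := Ideal.mem_span_singleton.mp hfmem
        have := congrArg TrivSqZeroExt.fst hc
        simpa [fst_mul] using this
      have hf0 : f = 0 := by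
        have h2 := congrArg TrivSqZeroExt.snd hf
        rw [snd_mul, hffst] at h2
        refine TrivSqZeroExt.ext (by simpa using hffst) ?_
        simpa using h2.symm
      have hmem : (inr (a • x) : TrivSqZeroExt A E) ∈ Ideal.span {f} :=
        hI ▸ Ideal.mem_span_singleton_self _
      rw [hf0, Ideal.span_singleton_eq_bot.mpr rfl, Ideal.mem_bot] at hmem
      have := congrArg TrivSqZeroExt.snd hmem
      simpa using this
  · rintro ⟨hA, hE⟩ I J hIfg hJfg hIJ hJtop ⟨e', he', rfl⟩
    have he : IsIdempotentElem e'.fst := by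
      have := congrArg TrivSqZeroExt.fst he'
      rwa [fst_mul] at this
    have hnu : ¬ IsUnit e'.fst := fun h =>
      hJtop (Ideal.span_singleton_eq_top.mpr (isUnit_iff_isUnit_fst.mpr h))
    have heE : ∀ y : E, e'.fst • y = 0 := hE e'.fst he hnu
    have hesnd : e'.snd = 0 := by
      have := congrArg TrivSqZeroExt.snd he'
      rw [snd_mul, op_smul_eq_smul, heE] at this
      simpa using this.symm
    have hJ : ∀ z ∈ Ideal.span {e'}, z.snd = 0 ∧ z.fst ∈ Ideal.span {e'.fst} := by
      intro z hz
      obtain ⟨c, hc⟩ := Ideal.mem_span_singleton.mp hz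
      constructor
      · rw [hc, snd_mul, heE, hesnd, smul_zero, add_zero]
      · exact Ideal.mem_span_singleton.mpr ⟨c.fst, by rw [hc, fst_mul]⟩
    have hmaple : I.map π ≤ Ideal.span {e'.fst} := by
      rw [Ideal.map_le_iff_le_comap]
      intro z hz
      exact (hJ z (hIJ hz)).2
    obtain ⟨f, hf, hI0⟩ := hA (I.map π) (Ideal.span {e'.fst}) (hIfg.map π)
      (span_singleton_fg _) hmaple (fun h => hnu (Ideal.span_singleton_eq_top.mp h)) ⟨e'.fst, he, rfl⟩
    have hfmem : f ∈ Ideal.span {e'.fst} :=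
      hmaple (hI0 ▸ Ideal.mem_span_singleton_self f)
    have hfnu : ¬ IsUnit f := fun h => by
      obtain ⟨c, hc⟩ := Ideal.mem_span_singleton.mp hfmem
      exact hnu (isUnit_of_mul_isUnit_left (hc ▸ h))
    have hfE : ∀ y : E, f • y = 0 := hE f hf hfnu
    refine ⟨inl f, ?_, ?_⟩
    · show inl f * inl f = inl f
      rw [← inl_mul, hf]
    · apply le_antisymm
      · intro z hz
        have hz2 := hJ z (hIJ hz)
        have : z.fst ∈ I.map π := Ideal.mem_map_of_mem π hz
        rw [hI0] at this
        obtain ⟨c, hc⟩ := Ideal.mem_span_singleton.mp this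
        refine Ideal.mem_span_singleton.mpr ⟨inl c, ?_⟩
        refine TrivSqZeroExt.ext ?_ ?_
        · rw [fst_mul, fst_inl, fst_inl, hc]
        · rw [snd_mul, fst_inl, snd_inl, snd_inl, hz2.1, hfE, smul_zero, add_zero]
      · rw [Ideal.span_le, Set.singleton_subset_iff]
        have : f ∈ I.map π := hI0 ▸ Ideal.mem_span_singleton_self f
        obtain ⟨z, hzI, hzf⟩ := (Ideal.mem_map_iff_of_surjective π hπs).mp this
        have hz2 := hJ z (hIJ hzI)
        have : z = inl f := TrivSqZeroExt.ext (by rw [fst_inl]; exact hzf) (by rw [snd_inl]; exact hz2.1)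
        exact this ▸ hzI
end

section
/- For a commutative ring A, the trivial extension A ⋉ A is weak von Neumann regular if and only if A has exactly two idempotent elements, 0 and 1. -/
theorem stmt_19 (A : Type _) [CommRing A] [Nontrivial A] :
    IsWVNR (TrivSqZeroExt A A) ↔
      ∀ e : A, IsIdempotentElem e → e = 0 ∨ e = 1 := by
  constructor
  · intro h e he
    by_cases h1 : e = 1
    · right; exact h1
    left
    have hJtop : (Ideal.span {TrivSqZeroExt.inl e} : Ideal (TrivSqZeroExt A A)) ≠ ⊤ := by
      intro ht
      rw [Ideal.span_singleton_eq_top] at ht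
      have hu : IsUnit e := by
        have := ht.map (TrivSqZeroExt.fstHom A A A)
        simpa using this
      obtain ⟨u, hu⟩ := hu
      apply h1
      have : e * e = e := he
      calc e = 1 * e := by ring
        _ = (↑u⁻¹ * e) * e := by rw [← u.inv_mul, hu]
        _ = ↑u⁻¹ * (e * e) := by ring
        _ = ↑u⁻¹ * e := by rw [this]
        _ = 1 := by rw [← hu, u.inv_mul]
    have hle : (Ideal.span {TrivSqZeroExt.inr e} : Ideal (TrivSqZeroExt A A)) ≤
        Ideal.span {TrivSqZeroExt.inl e} := by
      rw [Ideal.span_singleton_le_span_singleton]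
      exact ⟨TrivSqZeroExt.inr 1, by rw [TrivSqZeroExt.inl_mul_inr, smul_eq_mul, mul_one]⟩
    obtain ⟨f, hf, hI⟩ := h _ _ ⟨{TrivSqZeroExt.inr e}, by simp⟩
      ⟨{TrivSqZeroExt.inl e}, by simp⟩ hle hJtop
      ⟨TrivSqZeroExt.inl e, by
        constructor
        · show _ * _ = _
          rw [TrivSqZeroExt.inl_mul_inl]
          exact congrArg _ he
        · rfl⟩
    -- f ∈ span {inr e}, so fst f = 0
    have hfmem : f ∈ Ideal.span {TrivSqZeroExt.inr e} := by
      rw [hI]; exact Ideal.mem_span_singleton_self f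
    rw [Ideal.mem_span_singleton] at hfmem
    obtain ⟨c, hc⟩ := hfmem
    have hffst : f.fst = 0 := by
      rw [hc, TrivSqZeroExt.fst_mul, TrivSqZeroExt.fst_inr, zero_mul]
    have hfsnd : f.snd = 0 := by
      have : (f * f).snd = f.snd := congrArg TrivSqZeroExt.snd hf
      rw [TrivSqZeroExt.snd_mul, hffst] at this
      simpa using this.symm
    have hf0 : f = 0 := TrivSqZeroExt.ext hffst hfsnd
    have : TrivSqZeroExt.inr (M := A) e ∈ Ideal.span {f} := by
      rw [← hI]; exact Ideal.mem_span_singleton_self _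
    rw [hf0, Ideal.span_singleton_eq_bot.mpr rfl, Ideal.mem_bot] at this
    have := congrArg TrivSqZeroExt.snd this
    simpa using this
  · intro h I J hIfg hJfg hIJ hJtop ⟨e, he, hJ⟩
    have hfst : IsIdempotentElem e.fst := by
      have := congrArg TrivSqZeroExt.fst he
      rw [TrivSqZeroExt.fst_mul] at this
      exact this
    rcases h e.fst hfst with h0 | h1
    · -- e.fst = 0, so e = 0 and J = ⊥
      have hsnd : e.snd = 0 := by
        have := congrArg TrivSqZeroExt.snd he
        rw [TrivSqZeroExt.snd_mul, h0] at this
        simpa using this.symm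
      have he0 : e = 0 := TrivSqZeroExt.ext h0 hsnd
      refine ⟨0, IsIdempotentElem.zero, ?_⟩
      have hJbot : J = ⊥ := by
        rw [hJ, he0, Ideal.span_singleton_eq_bot]
      rw [Ideal.span_singleton_eq_bot.mpr rfl]
      exact le_bot_iff.mp (hJbot ▸ hIJ)
    · -- e.fst = 1, so e = 1, contradicting J ≠ ⊤
      exfalso
      apply hJtop
      have hsnd : e.snd = 0 := by
        have h2 := congrArg TrivSqZeroExt.snd he
        rw [TrivSqZeroExt.snd_mul, h1] at h2
        simp only [smul_eq_mul, one_mul, MulOpposite.op_one, one_smul] at h2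
        have h3 : e.snd + e.snd = e.snd + 0 := h2.trans (add_zero e.snd).symm
        exact add_left_cancel h3
      have he1 : e = 1 := TrivSqZeroExt.ext (by simpa using h1) (by simpa using hsnd)
      rw [hJ, he1, Ideal.span_singleton_one]
end
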